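/- Let K be a traceless totally symmetric cubic form on R^3_1 invariant under C_{1,m} = [[1,-m,-m²/2],[0,1,m],[0,0,1]] for some m ≠ 0 (expressed in an LVB). Then all LVB coefficients of K vanish except possibly b_7, i.e., K(X,X) = b_7 z² e where z is the f-component of X. -/

import Mathlib

open Matrix

/-- Inner product of `ℝ³₁` in a light-vector basis `{e,v,f}`. -/
def ipL (x y : Fin 3 → ℝ) : ℝ := x 0 * y 2 + x 2 * y 0 + x 1 * y 1

/-- The light-vector basis `{e,v,f}` in coordinates. -/
def bas : Fin 3 → Fin 3 → ℝ := ![![1, 0, 0], ![0, 1, 0], ![0, 0, 1]]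

/-- The matrix `C_{1,m}` with respect to the LVB. -/
noncomputable def C1m (m : ℝ) : Matrix (Fin 3) (Fin 3) ℝ :=
  !![1, -m, -(m ^ 2 / 2); 0, 1, m; 0, 0, 1]

/-!
Write `T(X, Y, Z) = ⟨K(X, Y), Z⟩` and give the basis vectors `e, v, f` the weights `0, 1, 2`.
The matrix `C_{1,m}` fixes `e` and lowers weights (`v ↦ v - m e`, `f ↦ f + m v - (m²/2) e`), so
once the coefficients of `T` of weight `< w` are known to vanish, the invariance equation of a
basis triple of weight `w + 1` says that `m` times a combination of coefficients of weight `w`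
vanishes. Together with the trace relations `2 T(X, e, f) + T(X, v, v) = 0` this kills, weight by
weight, every coefficient of the totally symmetric form `T` except `T(f, f, f) = b₇`.
-/

theorem ipL_add_left (x y z : Fin 3 → ℝ) : ipL (x + y) z = ipL x z + ipL y z := by
  simp only [ipL, Pi.add_apply]; ring

theorem ipL_sub_left (x y z : Fin 3 → ℝ) : ipL (x - y) z = ipL x z - ipL y z := by
  simp only [ipL, Pi.sub_apply]; ring

theorem ipL_smul_left (r : ℝ) (x z : Fin 3 → ℝ) : ipL (r • x) z = r * ipL x z := by
  simp only [ipL, Pi.smul_apply, smul_eq_mul]; ring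

theorem ipL_add_right (x y z : Fin 3 → ℝ) : ipL x (y + z) = ipL x y + ipL x z := by
  simp only [ipL, Pi.add_apply]; ring

theorem ipL_sub_right (x y z : Fin 3 → ℝ) : ipL x (y - z) = ipL x y - ipL x z := by
  simp only [ipL, Pi.sub_apply]; ring

theorem ipL_smul_right (r : ℝ) (x z : Fin 3 → ℝ) : ipL x (r • z) = r * ipL x z := by
  simp only [ipL, Pi.smul_apply, smul_eq_mul]; ring

theorem ipL_bas_zero (w : Fin 3 → ℝ) : ipL w (bas 0) = w 2 := by
  simp [ipL, bas]

theorem ipL_bas_one (w : Fin 3 → ℝ) : ipL w (bas 1) = w 1 := by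
  simp [ipL, bas]

theorem ipL_bas_two (w : Fin 3 → ℝ) : ipL w (bas 2) = w 0 := by
  simp [ipL, bas]

theorem sum_smul_bas (X : Fin 3 → ℝ) : ∑ i, X i • bas i = X := by
  ext k; fin_cases k <;> simp [bas, Fin.sum_univ_three]

theorem C1m_mulVec_bas_zero (m : ℝ) : C1m m *ᵥ bas 0 = bas 0 := by
  ext i; fin_cases i <;> simp [C1m, bas, mulVec, dotProduct, Fin.sum_univ_three]

theorem C1m_mulVec_bas_one (m : ℝ) : C1m m *ᵥ bas 1 = bas 1 - m • bas 0 := by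
  ext i; fin_cases i <;> simp [C1m, bas, mulVec, dotProduct, Fin.sum_univ_three]

theorem C1m_mulVec_bas_two (m : ℝ) :
    C1m m *ᵥ bas 2 = bas 2 + m • bas 1 - (m ^ 2 / 2) • bas 0 := by
  ext i; fin_cases i <;> simp [C1m, bas, mulVec, dotProduct, Fin.sum_univ_three]

theorem apply_self_eq_sq_smul {M : Type*} [AddCommGroup M] [Module ℝ M]
    (B : (Fin 3 → ℝ) →ₗ[ℝ] (Fin 3 → ℝ) →ₗ[ℝ] M)
    (hB : ∀ i j, ¬(i = 2 ∧ j = 2) → B (bas i) (bas j) = 0) (X : Fin 3 → ℝ) :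
    B X X = (X 2) ^ 2 • B (bas 2) (bas 2) := by
  conv_lhs => rw [← sum_smul_bas X]
  simp [Fin.sum_univ_three, hB, smul_smul, sq]

theorem trace_eq_metric_contraction
    (K : (Fin 3 → ℝ) →ₗ[ℝ] (Fin 3 → ℝ) →ₗ[ℝ] (Fin 3 → ℝ))
    (htot : ∀ X Y Z, ipL (K X Y) Z = ipL (K X Z) Y) (X : Fin 3 → ℝ) :
    ∑ i, K X (bas i) i = 2 * ipL (K X (bas 0)) (bas 2) + ipL (K X (bas 1)) (bas 1) := by
  have h22 : K X (bas 2) 2 = K X (bas 0) 0 := by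
    simpa only [ipL_bas_zero, ipL_bas_two] using htot X (bas 2) (bas 0)
  rw [Fin.sum_univ_three, h22, ipL_bas_two, ipL_bas_one]
  ring

theorem sorted_coeffs_eq_zero
    (K : (Fin 3 → ℝ) →ₗ[ℝ] (Fin 3 → ℝ) →ₗ[ℝ] (Fin 3 → ℝ))
    (hsymm : ∀ X Y, K X Y = K Y X) (htot : ∀ X Y Z, ipL (K X Y) Z = ipL (K X Z) Y)
    (htr : ∀ X, ∑ i, K X (bas i) i = 0) {m : ℝ} (hm : m ≠ 0)
    (hinv : ∀ X Y Z, ipL (K ((C1m m).mulVec X) ((C1m m).mulVec Y))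
      ((C1m m).mulVec Z) = ipL (K X Y) Z) :
    ipL (K (bas 0) (bas 0)) (bas 0) = 0 ∧ ipL (K (bas 0) (bas 0)) (bas 1) = 0 ∧
    ipL (K (bas 0) (bas 0)) (bas 2) = 0 ∧ ipL (K (bas 0) (bas 1)) (bas 1) = 0 ∧
    ipL (K (bas 0) (bas 1)) (bas 2) = 0 ∧ ipL (K (bas 0) (bas 2)) (bas 2) = 0 ∧
    ipL (K (bas 1) (bas 1)) (bas 1) = 0 ∧ ipL (K (bas 1) (bas 1)) (bas 2) = 0 ∧
    ipL (K (bas 1) (bas 2)) (bas 2) = 0 := by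
  have inv_eev := hinv (bas 0) (bas 0) (bas 1)
  have inv_evv := hinv (bas 0) (bas 1) (bas 1)
  have inv_vvv := hinv (bas 1) (bas 1) (bas 1)
  have inv_vvf := hinv (bas 1) (bas 1) (bas 2)
  have inv_vff := hinv (bas 1) (bas 2) (bas 2)
  have inv_fff := hinv (bas 2) (bas 2) (bas 2)
  have tr_e := htr (bas 0)
  have tr_v := htr (bas 1)
  have tr_f := htr (bas 2)
  rw [trace_eq_metric_contraction K htot] at tr_e tr_v tr_f
  -- `hsymm` and `htot` are permutation lemmas: `simp` uses them to sort the arguments of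
  -- every coefficient `ipL (K (bas i) (bas j)) (bas k)` into `i ≤ j ≤ k`.
  simp only [C1m_mulVec_bas_zero, C1m_mulVec_bas_one, C1m_mulVec_bas_two, map_add, map_sub,
    map_smul, LinearMap.add_apply, LinearMap.sub_apply, LinearMap.smul_apply, ipL_add_left,
    ipL_sub_left, ipL_smul_left, ipL_add_right, ipL_sub_right, ipL_smul_right, hsymm, htot]
    at inv_eev inv_evv inv_vvv inv_vvf inv_vff inv_fff tr_e tr_v tr_f
  generalize ipL (K (bas 0) (bas 0)) (bas 0) = eee at *
  generalize ipL (K (bas 0) (bas 0)) (bas 1) = eev at *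
  generalize ipL (K (bas 0) (bas 0)) (bas 2) = eef at *
  generalize ipL (K (bas 0) (bas 1)) (bas 1) = evv at *
  generalize ipL (K (bas 0) (bas 1)) (bas 2) = evf at *
  generalize ipL (K (bas 0) (bas 2)) (bas 2) = eff at *
  generalize ipL (K (bas 1) (bas 1)) (bas 1) = vvv at *
  generalize ipL (K (bas 1) (bas 1)) (bas 2) = vvf at *
  generalize ipL (K (bas 1) (bas 2)) (bas 2) = vff at *
  obtain rfl : eee = 0 := (mul_eq_zero_iff_left hm).mp (by linear_combination -inv_eev)
  obtain rfl : eev = 0 := (mul_eq_zero_iff_left hm).mp (by linear_combination -inv_evv / 2)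
  obtain rfl : evv = 0 := (mul_eq_zero_iff_left hm).mp (by linear_combination -inv_vvv / 3)
  obtain rfl : eef = 0 := by linear_combination tr_e / 2
  obtain rfl : evf = 0 :=
    (mul_eq_zero_iff_left hm).mp (by linear_combination -inv_vvf / 4 + m / 4 * tr_v)
  obtain rfl : vvv = 0 := by linear_combination tr_v
  obtain rfl : vvf = 0 :=
    (mul_eq_zero_iff_left hm).mp (by linear_combination 2 / 5 * inv_vff + m / 5 * tr_f)
  obtain rfl : eff = 0 := by linear_combination tr_f / 2
  obtain rfl : vff = 0 := (mul_eq_zero_iff_left hm).mp (by linear_combination inv_fff / 3)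
  simp

theorem eq_smul_bas_zero (w : Fin 3 → ℝ) (h1 : w 1 = 0) (h2 : w 2 = 0) : w = w 0 • bas 0 := by
  ext k; fin_cases k <;> simp [bas, h1, h2]

theorem apply_bas_apply_eq_zero
    (K : (Fin 3 → ℝ) →ₗ[ℝ] (Fin 3 → ℝ) →ₗ[ℝ] (Fin 3 → ℝ))
    (hsymm : ∀ X Y, K X Y = K Y X) (htot : ∀ X Y Z, ipL (K X Y) Z = ipL (K X Z) Y)
    (htr : ∀ X, ∑ i, K X (bas i) i = 0) {m : ℝ} (hm : m ≠ 0)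
    (hinv : ∀ X Y Z, ipL (K ((C1m m).mulVec X) ((C1m m).mulVec Y))
      ((C1m m).mulVec Z) = ipL (K X Y) Z) (i j k : Fin 3) (hijk : ¬(i = 2 ∧ j = 2 ∧ k = 0)) :
    K (bas i) (bas j) k = 0 := by
  obtain ⟨eee, eev, eef, evv, evf, eff, vvv, vvf, vff⟩ :=
    sorted_coeffs_eq_zero K hsymm htot htr hm hinv
  fin_cases i <;> fin_cases j <;> fin_cases k <;>
    simp only [Fin.reduceFinMk, ← ipL_bas_zero, ← ipL_bas_one, ← ipL_bas_two, hsymm, htot] <;>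
    first | assumption | exact absurd ⟨rfl, rfl, rfl⟩ hijk

/-- If a traceless totally symmetric cubic form `K` on `ℝ³₁` is invariant under
`C_{1,m}` for some `m ≠ 0`, then all LVB coefficients of `K` vanish except
possibly `b₇ = (K(f,f))_e`; equivalently `K(X,X) = b₇ z² e` where `z` is the
`f`-component of `X`. -/
theorem stmt9 (K : (Fin 3 → ℝ) →ₗ[ℝ] (Fin 3 → ℝ) →ₗ[ℝ] (Fin 3 → ℝ))
    (hsymm : ∀ X Y, K X Y = K Y X)
    (htot : ∀ X Y Z, ipL (K X Y) Z = ipL (K X Z) Y)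
    (htr : ∀ X, ∑ i, K X (bas i) i = 0)
    (m : ℝ) (hm : m ≠ 0)
    (hinv : ∀ X Y Z, ipL (K ((C1m m).mulVec X) ((C1m m).mulVec Y))
      ((C1m m).mulVec Z) = ipL (K X Y) Z) :
    K (bas 0) (bas 0) = 0 ∧ K (bas 0) (bas 1) 0 = 0 ∧ K (bas 0) (bas 2) 0 = 0 ∧
    K (bas 2) (bas 2) 1 = 0 ∧
    ∀ X : Fin 3 → ℝ, K X X = (K (bas 2) (bas 2) 0 * (X 2) ^ 2) • bas 0 := by
  have hK := apply_bas_apply_eq_zero K hsymm htot htr hm hinv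
  have hK_off : ∀ i j, ¬(i = 2 ∧ j = 2) → K (bas i) (bas j) = 0 := fun i j hij =>
    funext fun k => hK i j k (by tauto)
  have hK_ff : K (bas 2) (bas 2) = K (bas 2) (bas 2) 0 • bas 0 :=
    eq_smul_bas_zero _ (hK 2 2 1 (by decide)) (hK 2 2 2 (by decide))
  refine ⟨hK_off 0 0 (by decide), hK 0 1 0 (by decide), hK 0 2 0 (by decide),
    hK 2 2 1 (by decide), fun X => ?_⟩
  rw [apply_self_eq_sq_smul K hK_off X, mul_comm, ← smul_smul, ← hK_ff]
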